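/- Fix V ≠ 0, δ = 0, and 0 < A_− ≤ A_+, and define Z(k) = (λ_+(k) + (k + V/2))·A_− − (λ_−(k) + (k − V/2))·A_+ for k ∈ ℝ (this is, up to a nonvanishing factor, the reflection coefficient ρ(k) of the pure two-sided step initial condition). Then: (i) if A_+ = A_−, Z(k) ≠ 0 for every k ∈ ℝ; (ii) if A_+ ≠ A_−, then for k ∈ ℝ one has Z(k) = 0 if and only if k = (V/2)·(A_+ + A_−)/(A_+ − A_−). -/

import Mathlib

/-! On the real axis `λ(x;A) = sign x · √(x² + A²)`, and `x ↦ λ(x;A) + x` is injective and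
homogeneous of degree one in `(x, A)`. Rescaling `x = k + V/2` by `A₋/A₊` therefore turns
`Z(k) = 0` into the linear equation `A₊(k − V/2) = A₋(k + V/2)`. -/

/-- The argument of a complex number normalized to lie in `[−π/2, 3π/2)`:
if `arg z ∈ (−π, −π/2)` we add `2π`. -/
noncomputable def argS (z : ℂ) : ℝ :=
  if Complex.arg z < -(Real.pi / 2) then Complex.arg z + 2 * Real.pi else Complex.arg z

/-- The branch `λ(k;A) = √(r₁r₂)·exp(i(φ₁+φ₂)/2)` of `(k² + A²)^{1/2}`, where
`k − iA = r₁e^{iφ₁}`, `k + iA = r₂e^{iφ₂}` with `φ₁, φ₂ ∈ [−π/2, 3π/2)`;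
its branch cut lies along the segment `i[−A,A]` and it is continuous from the
right on the cut. -/
noncomputable def lamBr (A : ℝ) (k : ℂ) : ℂ :=
  ((Real.sqrt (‖k - Complex.I * (A : ℂ)‖ * ‖k + Complex.I * (A : ℂ)‖) : ℝ) : ℂ) *
    Complex.exp (Complex.I *
      (((argS (k - Complex.I * (A : ℂ)) + argS (k + Complex.I * (A : ℂ))) / 2 : ℝ) : ℂ))

/-- `Z(k) = (λ₊(k) + (k + V/2))·A₋ − (λ₋(k) + (k − V/2))·A₊` for real `k`
(up to a nonvanishing factor, the reflection coefficient of the pure two-sided step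
initial condition with `δ = 0`). -/
noncomputable def Zrefl (Am Ap V : ℝ) (k : ℝ) : ℂ :=
  (lamBr Ap ((k : ℂ) + (V : ℂ) / 2) + ((k : ℂ) + (V : ℂ) / 2)) * (Am : ℂ)
    - (lamBr Am ((k : ℂ) - (V : ℂ) / 2) + ((k : ℂ) - (V : ℂ) / 2)) * (Ap : ℂ)

open Complex ComplexConjugate

lemma argS_of_nonneg {z : ℂ} (h : 0 ≤ z.im) : argS z = arg z := by
  have : 0 ≤ arg z := arg_nonneg_iff.mpr h
  rw [argS, if_neg (by linarith [Real.pi_pos])]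

lemma argS_conj_add_argS {z : ℂ} (h : 0 < z.im) :
    argS (conj z) + argS z = if 0 ≤ z.re then 0 else 2 * Real.pi := by
  have hθπ : arg z ≠ Real.pi := fun hπ => h.ne' (arg_eq_pi_iff.mp hπ).2
  have hconj : arg (conj z) = -arg z := by rw [arg_conj, if_neg hθπ]
  rw [argS_of_nonneg h.le, argS, hconj]
  split_ifs with hlt hre hre
  · have := arg_le_pi_div_two_iff.mpr (Or.inl hre)
    linarith
  · ring
  · ring
  · have := (arg_le_pi_div_two_iff (z := z)).mp (by linarith)
    exact absurd (this.resolve_right (not_lt.mpr h.le)) hre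

noncomputable def lamReal (A x : ℝ) : ℝ :=
  if 0 ≤ x then √(x ^ 2 + A ^ 2) else -√(x ^ 2 + A ^ 2)

lemma lamBr_ofReal {A : ℝ} (hA : 0 < A) (x : ℝ) : lamBr A x = lamReal A x := by
  set z : ℂ := x + A * I
  have hre : z.re = x := by simp [z]
  have him : 0 < z.im := by simpa [z] using hA
  have hminus : (x : ℂ) - I * A = conj z := by apply Complex.ext <;> simp [z]
  have hplus : (x : ℂ) + I * A = z := by ring
  have hnorm : √(‖conj z‖ * ‖z‖) = √(x ^ 2 + A ^ 2) := by
    rw [norm_conj, Real.sqrt_mul_self (norm_nonneg z), norm_add_mul_I]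
  rw [lamBr, hminus, hplus, hnorm, argS_conj_add_argS him, hre, lamReal]
  split_ifs
  · simp
  · have : ((2 * Real.pi / 2 : ℝ) : ℂ) = Real.pi := by push_cast; ring
    rw [this, mul_comm I, exp_pi_mul_I]
    push_cast
    ring

lemma lamReal_sq (A x : ℝ) : lamReal A x ^ 2 = x ^ 2 + A ^ 2 := by
  unfold lamReal
  split_ifs <;> simp [Real.sq_sqrt (by positivity : (0 : ℝ) ≤ x ^ 2 + A ^ 2)]

lemma lamReal_mul {t : ℝ} (ht : 0 < t) (A x : ℝ) :
    lamReal (t * A) (t * x) = t * lamReal A x := by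
  have hsqrt : √((t * x) ^ 2 + (t * A) ^ 2) = t * √(x ^ 2 + A ^ 2) := by
    rw [show (t * x) ^ 2 + (t * A) ^ 2 = t ^ 2 * (x ^ 2 + A ^ 2) by ring,
      Real.sqrt_mul (by positivity), Real.sqrt_sq ht.le]
  simp only [lamReal, hsqrt, mul_nonneg_iff_of_pos_left ht]
  split_ifs <;> ring

/-- `x` is recovered from `w = λ(x;A) + x` as `(w² − A²)/(2w)`, since `w² = 2xw + A²`. -/
lemma lamReal_add_self_injective {A : ℝ} (hA : A ≠ 0) :
    Function.Injective fun x => lamReal A x + x := by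
  have hsq : ∀ x, (lamReal A x + x) ^ 2 = 2 * x * (lamReal A x + x) + A ^ 2 := fun x => by
    linear_combination lamReal_sq A x
  intro x y (hxy : lamReal A x + x = lamReal A y + y)
  have hx := hsq x
  have hy := hsq y
  rw [← hxy] at hy
  have hw : lamReal A x + x ≠ 0 := fun h0 => hA (by simpa [h0] using hx.symm)
  have : 2 * (lamReal A x + x) * (x - y) = 0 := by linear_combination hy - hx
  simpa [hw, sub_eq_zero] using this

lemma Zrefl_eq_ofReal {Am Ap : ℝ} (hm : 0 < Am) (hp : 0 < Ap) (V k : ℝ) :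
    Zrefl Am Ap V k = (Am * (lamReal Ap (k + V / 2) + (k + V / 2))
      - Ap * (lamReal Am (k - V / 2) + (k - V / 2)) : ℝ) := by
  have hplus : (k : ℂ) + V / 2 = (k + V / 2 : ℝ) := by push_cast; ring
  have hminus : (k : ℂ) - V / 2 = (k - V / 2 : ℝ) := by push_cast; ring
  rw [Zrefl, hplus, hminus, lamBr_ofReal hp, lamBr_ofReal hm]
  push_cast
  ring

lemma Zrefl_eq_zero_iff {Am Ap : ℝ} (hm : 0 < Am) (hp : 0 < Ap) (V k : ℝ) :
    Zrefl Am Ap V k = 0 ↔ Ap * (k - V / 2) = Am * (k + V / 2) := by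
  obtain ⟨t, ht, rfl⟩ : ∃ t > 0, t * Ap = Am :=
    ⟨Am / Ap, div_pos hm hp, div_mul_cancel₀ Am hp.ne'⟩
  set x := k + V / 2
  set y := k - V / 2
  have hscale : t * Ap * (lamReal Ap x + x) = Ap * (lamReal (t * Ap) (t * x) + t * x) := by
    rw [lamReal_mul ht]
    ring
  calc Zrefl (t * Ap) Ap V k = 0
      ↔ Ap * (lamReal (t * Ap) (t * x) + t * x) = Ap * (lamReal (t * Ap) y + y) := by
        rw [Zrefl_eq_ofReal hm hp, ofReal_eq_zero, sub_eq_zero, hscale]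
    _ ↔ t * x = y := by
        rw [mul_right_inj' hp.ne', (lamReal_add_self_injective hm.ne').eq_iff]
    _ ↔ Ap * y = t * Ap * x := by
        rw [eq_comm, mul_comm t Ap, mul_assoc, mul_right_inj' hp.ne']

/-- For `V ≠ 0`, `δ = 0`, `0 < A₋ ≤ A₊`: (i) if `A₊ = A₋` then `Z(k) ≠ 0` for every
real `k`; (ii) if `A₊ ≠ A₋` then `Z(k) = 0` iff `k = (V/2)·(A₊ + A₋)/(A₊ − A₋)`. -/
theorem step_reflection_zeros (Am Ap V : ℝ) (hV : V ≠ 0) (hm : 0 < Am) (hmp : Am ≤ Ap) :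
    (Ap = Am → ∀ k : ℝ, Zrefl Am Ap V k ≠ 0) ∧
    (Ap ≠ Am → ∀ k : ℝ,
      (Zrefl Am Ap V k = 0 ↔ k = V / 2 * ((Ap + Am) / (Ap - Am)))) := by
  have hp : 0 < Ap := hm.trans_le hmp
  refine ⟨fun hEq k hZ => ?_, fun hNe k => ?_⟩
  · rw [Zrefl_eq_zero_iff hm hp, hEq] at hZ
    exact hV (mul_left_cancel₀ hm.ne' (by linear_combination -hZ : Am * V = Am * 0))
  · rw [Zrefl_eq_zero_iff hm hp, ← mul_div_assoc, eq_div_iff (sub_ne_zero.mpr hNe)]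
    constructor <;> intro h <;> linear_combination h
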